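/- arXiv:1311.7589 — 2 statements merged into one kernel-verified Lean document; each statement's English description precedes it below -/
import Mathlib

section
/- Let x_1, x_2, ... be a sequence of nonnegative reals each at most εU, and let y_1, ..., y_m be nonnegative reals with ∑_{j} x_j ≥ ∑_i y_i. Define i(0) = 0 and, for k = 1, ..., m, let i(k) be the minimum index such that ∑_{j=1}^{i(k)} x_j ≥ ∑_{i=1}^{k} y_i. Then for each k, the sum ∑_{j=i(k-1)+1}^{i(k)} x_j lies in the interval [y_k - εU, y_k + εU]. -/
/-!
Write `S t` and `Y k` for the prefix sums of `x` and `y`. Minimality of `i(k)` says that before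
its last job the load was still below `Y k`, so adding one job of size at most `εU` gives
`Y k ≤ S (i k) ≤ Y k + εU`. Since `y ≥ 0`, the indices `i(k)` are nondecreasing, and the load of
the `k`-th block `S (i k) - S (i (k-1))` is then within `εU` of `Y k - Y (k-1) = y_k`.
-/

open Finset

section NextFit

variable {x y : ℕ → ℝ} {c : ℝ}

theorem sum_range_le_add_of_forall_lt {T : ℝ} {N : ℕ} (hx : ∀ j, x j ≤ c) (hc : 0 ≤ c)
    (hT : 0 ≤ T) (hN : ∀ t < N, ∑ j ∈ range t, x j < T) : ∑ j ∈ range N, x j ≤ T + c := by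
  cases N with
  | zero => simpa using add_nonneg hT hc
  | succ t =>
    rw [sum_range_succ]
    linarith [hN t t.lt_succ_self, hx t]

theorem sum_range_le_add_of_isLeast (hx : ∀ j, x j ≤ c) (hc : 0 ≤ c) (hy : ∀ i, 0 ≤ y i)
    {k N : ℕ} (hN : IsLeast {N | ∑ i ∈ range k, y i ≤ ∑ j ∈ range N, x j} N) :
    ∑ j ∈ range N, x j ≤ ∑ i ∈ range k, y i + c :=
  sum_range_le_add_of_forall_lt hx hc (sum_nonneg fun i _ => hy i)
    fun _ ht => not_le.1 fun h => (hN.2 h).not_gt ht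

theorem le_of_isLeast_of_isLeast_succ (hy : ∀ i, 0 ≤ y i) {k N N' : ℕ}
    (hN : IsLeast {N | ∑ i ∈ range k, y i ≤ ∑ j ∈ range N, x j} N)
    (hN' : IsLeast {N | ∑ i ∈ range (k + 1), y i ≤ ∑ j ∈ range N, x j} N') : N ≤ N' :=
  hN.2 <| calc
    ∑ i ∈ range k, y i ≤ ∑ i ∈ range (k + 1), y i := by rw [sum_range_succ]; linarith [hy k]
    _ ≤ ∑ j ∈ range N', x j := hN'.1

theorem sum_Ico_near_of_isLeast (hx : ∀ j, x j ≤ c) (hc : 0 ≤ c) (hy : ∀ i, 0 ≤ y i)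
    {k N N' : ℕ} (hN : IsLeast {N | ∑ i ∈ range k, y i ≤ ∑ j ∈ range N, x j} N)
    (hN' : IsLeast {N | ∑ i ∈ range (k + 1), y i ≤ ∑ j ∈ range N, x j} N') :
    y k - c ≤ ∑ j ∈ Ico N N', x j ∧ ∑ j ∈ Ico N N', x j ≤ y k + c := by
  rw [sum_Ico_eq_sub x (le_of_isLeast_of_isLeast_succ hy hN hN')]
  have hlow : ∑ i ∈ range k, y i ≤ ∑ j ∈ range N, x j := hN.1
  have hlow' : ∑ i ∈ range (k + 1), y i ≤ ∑ j ∈ range N', x j := hN'.1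
  have hup := sum_range_le_add_of_isLeast hx hc hy hN
  have hup' := sum_range_le_add_of_isLeast hx hc hy hN'
  rw [sum_range_succ] at hlow' hup'
  constructor <;> linarith

end NextFit

theorem stmt_4_general (ε U : ℝ) (m : ℕ)
    (x y : ℕ → ℝ) (hx0 : ∀ j, 0 ≤ x j) (hx1 : ∀ j, x j ≤ ε * U) (hy : ∀ i, 0 ≤ y i)
    (I : ℕ → ℕ) (hI0 : I 0 = 0)
    (hIge : ∀ k, 1 ≤ k → k ≤ m →
      ∑ i ∈ Finset.range k, y i ≤ ∑ j ∈ Finset.range (I k), x j)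
    (hImin : ∀ k, 1 ≤ k → k ≤ m → ∀ t, t < I k →
      ∑ j ∈ Finset.range t, x j < ∑ i ∈ Finset.range k, y i) :
    ∀ k, 1 ≤ k → k ≤ m →
      y (k - 1) - ε * U ≤ ∑ j ∈ Finset.Ico (I (k - 1)) (I k), x j ∧
      ∑ j ∈ Finset.Ico (I (k - 1)) (I k), x j ≤ y (k - 1) + ε * U := by
  have hc : 0 ≤ ε * U := (hx0 0).trans (hx1 0)
  have hleast : ∀ k ≤ m,
      IsLeast {N | ∑ i ∈ range k, y i ≤ ∑ j ∈ range N, x j} (I k) := by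
    intro k hkm
    rcases Nat.eq_zero_or_pos k with rfl | hk
    · exact ⟨by simp [hI0], fun _ _ => by simp [hI0]⟩
    · exact ⟨hIge k hk hkm, fun t ht => not_lt.1 fun hlt => (hImin k hk hkm t hlt).not_ge ht⟩
  intro k hk hkm
  obtain ⟨k, rfl⟩ := Nat.exists_eq_add_of_le' hk
  simpa using sum_Ico_near_of_isLeast hx1 hc hy (hleast k (by omega)) (hleast (k + 1) hkm)

theorem stmt_4 (ε U : ℝ) (hε : 0 < ε) (hU : 0 < U) (n m : ℕ)
    (x y : ℕ → ℝ) (hx0 : ∀ j, 0 ≤ x j) (hx1 : ∀ j, x j ≤ ε * U) (hy : ∀ i, 0 ≤ y i)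
    (hsum : ∑ i ∈ Finset.range m, y i ≤ ∑ j ∈ Finset.range n, x j)
    (I : ℕ → ℕ) (hI0 : I 0 = 0)
    (hIge : ∀ k, 1 ≤ k → k ≤ m →
      ∑ i ∈ Finset.range k, y i ≤ ∑ j ∈ Finset.range (I k), x j)
    (hImin : ∀ k, 1 ≤ k → k ≤ m → ∀ t, t < I k →
      ∑ j ∈ Finset.range t, x j < ∑ i ∈ Finset.range k, y i) :
    ∀ k, 1 ≤ k → k ≤ m →
      y (k - 1) - ε * U ≤ ∑ j ∈ Finset.Ico (I (k - 1)) (I k), x j ∧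
      ∑ j ∈ Finset.Ico (I (k - 1)) (I k), x j ≤ y (k - 1) + ε * U :=
  stmt_4_general ε U m x y hx0 hx1 hy I hI0 hIge hImin
end

section
/- If for every machine i the load satisfies 0 ≤ L_i(S) ≤ (1+ε)·L_i(S*) + ε·W/m, where W = ∑_i L_i(S*), then the ℓ_p norm of L(S) is at most (1+2ε) times the ℓ_p norm of L(S*), for any p > 1. -/
/-!
Pointwise, `L(S) ≤ (1 + ε) L(S*) + ε w̄`, where `w̄` is the constant vector `W / m`, i.e. `L(S*)`
with every entry replaced by the mean. Minkowski and homogeneity give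
`‖L(S)‖_p ≤ (1 + ε) ‖L(S*)‖_p + ε ‖w̄‖_p`, and by the power-mean inequality (convexity of
`x ↦ x ^ p`) averaging does not increase the `ℓ_p` norm, so `‖w̄‖_p ≤ ‖L(S*)‖_p`.
-/

open Finset Real

-- Only meaningful for nonnegative `f`: `Real.rpow` is not `|x| ^ p` at negative bases.
noncomputable def lpNorm {ι : Type*} [Fintype ι] (p : ℝ) (f : ι → ℝ) : ℝ :=
  (∑ i, f i ^ p) ^ (1 / p)

section lpNorm

variable {ι : Type*} [Fintype ι] {p : ℝ} {f g : ι → ℝ}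

theorem lpNorm_mono (hp : 0 ≤ p) (hf : 0 ≤ f) (hfg : f ≤ g) : lpNorm p f ≤ lpNorm p g :=
  rpow_le_rpow (sum_nonneg fun i _ => rpow_nonneg (hf i) p)
    (sum_le_sum fun i _ => rpow_le_rpow (hf i) (hfg i) hp) (by positivity)

theorem lpNorm_add_le (hp : 1 ≤ p) (hf : 0 ≤ f) (hg : 0 ≤ g) :
    lpNorm p (f + g) ≤ lpNorm p f + lpNorm p g :=
  Lp_add_le_of_nonneg univ hp (fun i _ => hf i) (fun i _ => hg i)

theorem lpNorm_smul (hp : p ≠ 0) {a : ℝ} (ha : 0 ≤ a) (hf : 0 ≤ f) :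
    lpNorm p (a • f) = a * lpNorm p f := by
  simp only [lpNorm, Pi.smul_apply, smul_eq_mul, mul_rpow ha (hf _), ← mul_sum]
  rw [mul_rpow (rpow_nonneg ha p) (sum_nonneg fun i _ => rpow_nonneg (hf i) p),
    ← rpow_mul ha, mul_one_div_cancel hp, rpow_one]

theorem sum_rpow_mean_le_sum_rpow (hp : 1 ≤ p) (hf : 0 ≤ f) :
    ∑ _i : ι, ((∑ i, f i) / Fintype.card ι) ^ p ≤ ∑ i, f i ^ p := by
  cases isEmpty_or_nonempty ι
  · simp
  have hn : (0 : ℝ) < Fintype.card ι := by exact_mod_cast Fintype.card_pos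
  have hW : 0 ≤ ∑ i, f i := sum_nonneg fun i _ => hf i
  have key := rpow_sum_le_const_mul_sum_rpow_of_nonneg univ hp (fun i _ => hf i)
  rw [card_univ] at key
  calc ∑ _i : ι, ((∑ i, f i) / Fintype.card ι) ^ p
      = (∑ i, f i) ^ p / (Fintype.card ι : ℝ) ^ (p - 1) := by
        rw [sum_const, card_univ, nsmul_eq_mul, div_rpow hW hn.le, rpow_sub_one hn.ne']
        field_simp
    _ ≤ ∑ i, f i ^ p := by
        rw [div_le_iff₀ (by positivity)]
        linarith

theorem lpNorm_const_mean_le (hp : 1 ≤ p) (hf : 0 ≤ f) :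
    lpNorm p (fun _ : ι => (∑ i, f i) / Fintype.card ι) ≤ lpNorm p f := by
  have hmean : 0 ≤ (∑ i, f i) / Fintype.card ι :=
    div_nonneg (sum_nonneg fun i _ => hf i) (Nat.cast_nonneg _)
  exact rpow_le_rpow (sum_nonneg fun _ _ => rpow_nonneg hmean p)
    (sum_rpow_mean_le_sum_rpow hp hf) (by positivity)

end lpNorm

theorem stmt_7_general (m : ℕ) (p : ℝ) (hp : 1 < p) (ε : ℝ) (hε : 0 < ε)
    (LS LSstar : Fin m → ℝ) (hLS : ∀ i, 0 ≤ LS i) (hLSstar : ∀ i, 0 ≤ LSstar i)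
    (W : ℝ) (hW : W = ∑ i, LSstar i)
    (h : ∀ i, LS i ≤ (1 + ε) * LSstar i + ε * W / m) :
    (∑ i, (LS i) ^ p) ^ (1 / p) ≤ (1 + 2 * ε) * (∑ i, (LSstar i) ^ p) ^ (1 / p) := by
  set mean : Fin m → ℝ := fun _ => (∑ i, LSstar i) / Fintype.card (Fin m)
  have hmean : 0 ≤ mean := fun _ =>
    div_nonneg (sum_nonneg fun i _ => hLSstar i) (Nat.cast_nonneg _)
  have hbound : LS ≤ (1 + ε) • LSstar + ε • mean := fun i => by
    simpa [mean, hW, mul_div_assoc] using h i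
  change lpNorm p LS ≤ (1 + 2 * ε) * lpNorm p LSstar
  calc lpNorm p LS
      ≤ lpNorm p ((1 + ε) • LSstar + ε • mean) := lpNorm_mono (by linarith) hLS hbound
    _ ≤ lpNorm p ((1 + ε) • LSstar) + lpNorm p (ε • mean) :=
        lpNorm_add_le hp.le (smul_nonneg (by linarith) hLSstar) (smul_nonneg hε.le hmean)
    _ = (1 + ε) * lpNorm p LSstar + ε * lpNorm p mean := by
        rw [lpNorm_smul (by linarith) (by linarith) hLSstar, lpNorm_smul (by linarith) hε.le hmean]
    _ ≤ (1 + ε) * lpNorm p LSstar + ε * lpNorm p LSstar := by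
        gcongr
        exact lpNorm_const_mean_le hp.le hLSstar
    _ = (1 + 2 * ε) * lpNorm p LSstar := by ring

theorem stmt_7 (m : ℕ) (hm : 1 ≤ m) (p : ℝ) (hp : 1 < p) (ε : ℝ) (hε : 0 < ε)
    (LS LSstar : Fin m → ℝ) (hLS : ∀ i, 0 ≤ LS i) (hLSstar : ∀ i, 0 ≤ LSstar i)
    (W : ℝ) (hW : W = ∑ i, LSstar i)
    (h : ∀ i, LS i ≤ (1 + ε) * LSstar i + ε * W / m) :
    (∑ i, (LS i) ^ p) ^ (1 / p) ≤ (1 + 2 * ε) * (∑ i, (LSstar i) ^ p) ^ (1 / p) :=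
  stmt_7_general m p hp ε hε LS LSstar hLS hLSstar W hW h
end
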